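/- If two graphs are locally equivalent, then they have the same linear rank-width. -/

import Mathlib

/-!
Over GF(2) exclusive-or is addition, so local complementation at `v` changes the cut matrix
`A(G)[X, V \ X]` by the rank-one matrix `a_X a_{V \ X}ᵀ`, where `a` is the indicator vector of
the neighbourhood of `v`. As `v` is not its own neighbour, this is the elementary operation that
adds row `v` (if `v ∈ X`) or column `v` (if `v ∉ X`) to the rows or columns indexed by
neighbours of `v`, so it preserves the rank. Hence every cut-rank, every layout width, and the
linear rank-width are invariant under local equivalence.
-/

/-- Local complementation at a vertex `v`. -/
def localComp {V : Type} (G : SimpleGraph V) (v : V) : SimpleGraph V where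
  Adj x y := x ≠ y ∧ Xor' (G.Adj x y) (G.Adj v x ∧ G.Adj v y)
  symm := by
    constructor
    rintro x y ⟨hne, h⟩
    exact ⟨hne.symm, by rwa [G.adj_comm y x, and_comm]⟩
  loopless := by constructor; rintro x ⟨hne, -⟩; exact hne rfl

/-- Two graphs are locally equivalent if one is obtained from the other by a
sequence of local complementations. -/
def LocallyEquivalent {V : Type} (G H : SimpleGraph V) : Prop :=
  ∃ l : List V, H = l.foldl localComp G

/-- The cut-rank of `X`: the rank over GF(2) of the adjacency submatrix
`A(G)[X, V \\ X]`. -/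
noncomputable def cutRank {V : Type} [Fintype V] [DecidableEq V]
    (G : SimpleGraph V) (X : Finset V) : ℕ := by
  classical
  exact Matrix.rank (Matrix.of fun (i : X) (j : (Xᶜ : Finset V)) =>
    if G.Adj (i : V) (j : V) then (1 : ZMod 2) else 0)

/-- A linear layout is an ordering of all vertices. -/
def IsLinearLayout {V : Type} (l : List V) : Prop := l.Nodup ∧ ∀ v : V, v ∈ l

/-- The width of a linear layout: the maximum cut-rank of an initial segment. -/
noncomputable def layoutWidth {V : Type} [Fintype V] [DecidableEq V]
    (G : SimpleGraph V) (l : List V) : ℕ :=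
  (Finset.range l.length).sup fun i => cutRank G (l.take (i+1)).toFinset

/-- The linear rank-width of a graph. -/
noncomputable def linRankWidth {V : Type} [Fintype V] [DecidableEq V]
    (G : SimpleGraph V) : ℕ :=
  sInf {k | ∃ l : List V, IsLinearLayout l ∧ layoutWidth G l = k}

namespace Matrix

variable {m n R : Type*} [Fintype m] [Fintype n]

theorem rank_add_vecMulVec_row [CommRing R] [DecidableEq m] (M : Matrix m n R) {u : m → R}
    {k : m} (hu : u k = 0) : (M + vecMulVec u (M.row k)).rank = M.rank := by
  have hdet : (1 + vecMulVec u (Pi.single k 1)).det = 1 := by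
    rw [vecMulVec_eq Unit, det_one_add_replicateCol_mul_replicateRow, single_one_dotProduct, hu,
      add_zero]
  have hmul : M + vecMulVec u (M.row k) = (1 + vecMulVec u (Pi.single k 1)) * M := by
    rw [Matrix.add_mul, Matrix.one_mul, vecMulVec_mul, single_one_vecMul]
  rw [hmul, rank_mul_eq_right_of_isUnit_det _ _ (by rw [hdet]; exact isUnit_one)]

theorem rank_add_vecMulVec_col [Field R] [DecidableEq n] (M : Matrix m n R) {w : n → R}
    {k : n} (hw : w k = 0) : (M + vecMulVec (M.col k) w).rank = M.rank := by
  rw [← rank_transpose, transpose_add, transpose_vecMulVec, ← rank_transpose M]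
  exact rank_add_vecMulVec_row Mᵀ hw

end Matrix

section

variable {V : Type}

theorem localComp_adj (G : SimpleGraph V) (v : V) {x y : V} :
    (localComp G v).Adj x y ↔ x ≠ y ∧ Xor (G.Adj x y) (G.Adj v x ∧ G.Adj v y) := Iff.rfl

variable [Fintype V] [DecidableEq V]

open Classical in
noncomputable def cutMatrix (G : SimpleGraph V) (X : Finset V) :
    Matrix X (Xᶜ : Finset V) (ZMod 2) :=
  Matrix.of fun i j => if G.Adj i j then 1 else 0

theorem cutRank_eq_rank_cutMatrix (G : SimpleGraph V) (X : Finset V) :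
    cutRank G X = (cutMatrix G X).rank := rfl

open Classical in
theorem cutMatrix_localComp (G : SimpleGraph V) (v : V) (X : Finset V) :
    cutMatrix (localComp G v) X = cutMatrix G X +
      Matrix.vecMulVec (fun i : X => if G.Adj v i then 1 else 0)
        (fun j : (Xᶜ : Finset V) => if G.Adj v j then 1 else 0) := by
  ext i j
  have hij : (i : V) ≠ j := fun h => Finset.mem_compl.mp j.2 (h ▸ i.2)
  simp only [cutMatrix, localComp_adj, hij, ne_eq, not_false_eq_true, true_and, Matrix.add_apply,
    Matrix.of_apply, Matrix.vecMulVec_apply]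
  by_cases G.Adj i j <;> by_cases G.Adj v i <;> by_cases G.Adj v j <;>
    simp_all [CharTwo.add_self_eq_zero]

theorem cutRank_localComp (G : SimpleGraph V) (v : V) (X : Finset V) :
    cutRank (localComp G v) X = cutRank G X := by
  classical
  rw [cutRank_eq_rank_cutMatrix, cutRank_eq_rank_cutMatrix, cutMatrix_localComp]
  by_cases hv : v ∈ X
  · have hrow : (fun j : (Xᶜ : Finset V) => if G.Adj v j then (1 : ZMod 2) else 0) =
        (cutMatrix G X).row ⟨v, hv⟩ := rfl
    rw [hrow]
    exact Matrix.rank_add_vecMulVec_row _ (by simp)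
  · have hcol : (fun i : X => if G.Adj v i then (1 : ZMod 2) else 0) =
        (cutMatrix G X).col ⟨v, Finset.mem_compl.mpr hv⟩ := by
      ext i; simp [cutMatrix, G.adj_comm]
    rw [hcol]
    exact Matrix.rank_add_vecMulVec_col _ (by simp)

theorem cutRank_foldl_localComp (G : SimpleGraph V) (l : List V) (X : Finset V) :
    cutRank (l.foldl localComp G) X = cutRank G X := by
  induction l generalizing G with
  | nil => rfl
  | cons v l ih => rw [List.foldl_cons, ih, cutRank_localComp]

theorem layoutWidth_congr {G H : SimpleGraph V} (h : ∀ X, cutRank G X = cutRank H X)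
    (l : List V) : layoutWidth G l = layoutWidth H l :=
  Finset.sup_congr rfl fun _ _ => h _

theorem linRankWidth_congr {G H : SimpleGraph V} (h : ∀ X, cutRank G X = cutRank H X) :
    linRankWidth G = linRankWidth H := by
  simp only [linRankWidth, layoutWidth_congr h]

end

theorem linRankWidth_eq_of_locallyEquivalent {V : Type} [Fintype V] [DecidableEq V]
    (G H : SimpleGraph V) (h : LocallyEquivalent G H) :
    linRankWidth G = linRankWidth H := by
  obtain ⟨l, rfl⟩ := h
  exact (linRankWidth_congr (cutRank_foldl_localComp G l)).symm
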